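/- Assume δ > 0. Then ψ is twice differentiable and there exists a unique w₀ ∈ ℝ such that ψ''(w₀) = 0; moreover ψ''(w) > 0 for all w < w₀ and ψ''(w) < 0 for all w > w₀. In particular ψ is strictly convex on (−∞, w₀] and strictly concave on [w₀, ∞). -/

import Mathlib

/-- `ρ(w) = 1/(1 + e^w)`. -/
noncomputable def logitρ (w : ℝ) : ℝ := 1 / (1 + Real.exp w)

/-- `φ(w) = κ + δ ρ(w)`. -/
noncomputable def mapφ (κ δ w : ℝ) : ℝ := κ + δ * logitρ w

/-- `ψ(w) = β₁ φ(β₂ φ(w))`. -/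
noncomputable def mapψ (κ δ β1 β2 w : ℝ) : ℝ := β1 * mapφ κ δ (β2 * mapφ κ δ w)

/-! ### Auxiliary definitions -/

noncomputable def psiD1 (x : ℝ) : ℝ := -Real.exp x / (1 + Real.exp x) ^ 2
noncomputable def psiD2 (x : ℝ) : ℝ := Real.exp x * (Real.exp x - 1) / (1 + Real.exp x) ^ 3
noncomputable def psiU (κ δ β2 w : ℝ) : ℝ := β2 * (κ + δ * logitρ w)
noncomputable def psi1 (κ δ β1 β2 w : ℝ) : ℝ :=
  β1 * (δ * (psiD1 (psiU κ δ β2 w) * (β2 * (δ * psiD1 w))))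
noncomputable def psi2 (κ δ β1 β2 w : ℝ) : ℝ :=
  β1 * (δ * (psiD2 (psiU κ δ β2 w) * (β2 * (δ * psiD1 w)) * (β2 * (δ * psiD1 w)) +
    psiD1 (psiU κ δ β2 w) * (β2 * (δ * psiD2 w))))
noncomputable def psiF (κ δ β2 w : ℝ) : ℝ :=
  β2 * δ * (1 - 2 * logitρ (psiU κ δ β2 w)) - (Real.exp w - Real.exp (-w))
noncomputable def psiP (κ δ β1 β2 w : ℝ) : ℝ :=
  β1 * β2 * δ ^ 2 * (Real.exp (psiU κ δ β2 w) / (1 + Real.exp (psiU κ δ β2 w)) ^ 2) *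
    (Real.exp w / (1 + Real.exp w) ^ 2) ^ 2

lemma one_add_exp_pos (x : ℝ) : 0 < 1 + Real.exp x := by positivity

lemma logitρ_pos (x : ℝ) : 0 < logitρ x := by unfold logitρ; positivity

lemma logitρ_lt_one (x : ℝ) : logitρ x < 1 := by
  unfold logitρ
  rw [div_lt_one (one_add_exp_pos x)]
  linarith [Real.exp_pos x]

lemma hasDerivAt_logitρ (x : ℝ) : HasDerivAt logitρ (psiD1 x) x := by
  have h : HasDerivAt (fun w : ℝ => 1 + Real.exp w) (Real.exp x) x :=
    (Real.hasDerivAt_exp x).const_add 1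
  have h2 := h.inv (one_add_exp_pos x).ne'
  have hfun : logitρ = fun w : ℝ => (1 + Real.exp w)⁻¹ := by
    funext w; simp [logitρ, one_div]
  rw [hfun]
  simpa [psiD1, neg_div, Pi.inv_def] using h2

lemma hasDerivAt_psiD1 (x : ℝ) : HasDerivAt psiD1 (psiD2 x) x := by
  have hnum : HasDerivAt (fun w : ℝ => -Real.exp w) (-Real.exp x) x :=
    (Real.hasDerivAt_exp x).neg
  have hden : HasDerivAt (fun w : ℝ => (1 + Real.exp w) ^ 2)
      (2 * (1 + Real.exp x) ^ 1 * Real.exp x) x :=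
    ((Real.hasDerivAt_exp x).const_add 1).pow 2
  have h := hnum.div hden (by positivity)
  have heq : (-Real.exp x * (1 + Real.exp x) ^ 2 -
      -Real.exp x * (2 * (1 + Real.exp x) ^ 1 * Real.exp x)) / ((1 + Real.exp x) ^ 2) ^ 2
      = psiD2 x := by
    unfold psiD2
    have hne : (1 + Real.exp x) ≠ 0 := (one_add_exp_pos x).ne'
    field_simp
    ring
  exact heq ▸ h

lemma logitρ_strictAnti : StrictAnti logitρ := by
  intro a b hab
  unfold logitρ
  apply div_lt_div_of_pos_left one_pos (one_add_exp_pos a)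
  have := Real.exp_lt_exp.mpr hab
  linarith

lemma continuous_logitρ : Continuous logitρ :=
  continuous_const.div (continuous_const.add Real.continuous_exp)
    (fun x => (one_add_exp_pos x).ne')

lemma hasDerivAt_psiU (κ δ β2 w : ℝ) :
    HasDerivAt (psiU κ δ β2) (β2 * (δ * psiD1 w)) w :=
  (((hasDerivAt_logitρ w).const_mul δ).const_add κ).const_mul β2

lemma hasDerivAt_mapψ (κ δ β1 β2 w : ℝ) :
    HasDerivAt (mapψ κ δ β1 β2) (psi1 κ δ β1 β2 w) w := by
  have h := (((((hasDerivAt_logitρ (psiU κ δ β2 w)).comp w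
    (hasDerivAt_psiU κ δ β2 w)).const_mul δ).const_add κ).const_mul β1)
  exact h

lemma hasDerivAt_psi1 (κ δ β1 β2 w : ℝ) :
    HasDerivAt (psi1 κ δ β1 β2) (psi2 κ δ β1 β2 w) w := by
  have hA : HasDerivAt (fun w => psiD1 (psiU κ δ β2 w))
      (psiD2 (psiU κ δ β2 w) * (β2 * (δ * psiD1 w))) w :=
    (hasDerivAt_psiD1 (psiU κ δ β2 w)).comp w (hasDerivAt_psiU κ δ β2 w)
  have hB : HasDerivAt (fun w => β2 * (δ * psiD1 w)) (β2 * (δ * psiD2 w)) w :=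
    ((hasDerivAt_psiD1 w).const_mul δ).const_mul β2
  exact ((hA.mul hB).const_mul δ).const_mul β1

lemma psi2_eq (κ δ β1 β2 w : ℝ) :
    psi2 κ δ β1 β2 w = psiP κ δ β1 β2 w * psiF κ δ β2 w := by
  unfold psi2 psiP psiF psiD1 psiD2 logitρ
  rw [Real.exp_neg]
  have h1 : (1 : ℝ) + Real.exp w ≠ 0 := (one_add_exp_pos w).ne'
  have h2 : (1 : ℝ) + Real.exp (psiU κ δ β2 w) ≠ 0 := (one_add_exp_pos _).ne'
  have h3 : Real.exp w ≠ 0 := (Real.exp_pos w).ne'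
  field_simp
  ring

lemma psiP_pos (κ δ β1 β2 : ℝ) (hδ : 0 < δ) (hβ1 : 0 < β1) (hβ2 : 0 < β2) (w : ℝ) :
    0 < psiP κ δ β1 β2 w := by
  unfold psiP
  have e1 : 0 < Real.exp (psiU κ δ β2 w) / (1 + Real.exp (psiU κ δ β2 w)) ^ 2 :=
    div_pos (Real.exp_pos _) (by positivity)
  have e2 : 0 < (Real.exp w / (1 + Real.exp w) ^ 2) ^ 2 :=
    pow_pos (div_pos (Real.exp_pos _) (by positivity)) 2
  have e3 : 0 < β1 * β2 * δ ^ 2 := by positivity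
  exact mul_pos (mul_pos e3 e1) e2

lemma psiF_strictAnti (κ δ β2 : ℝ) (hδ : 0 < δ) (hβ2 : 0 < β2) :
    StrictAnti (psiF κ δ β2) := by
  intro a b hab
  have hρ0 : logitρ b < logitρ a := logitρ_strictAnti hab
  have hU : psiU κ δ β2 b < psiU κ δ β2 a := by
    unfold psiU
    have := mul_lt_mul_of_pos_left hρ0 hδ
    exact mul_lt_mul_of_pos_left (by linarith) hβ2
  have hρ : logitρ (psiU κ δ β2 a) < logitρ (psiU κ δ β2 b) := logitρ_strictAnti hU
  have he1 : Real.exp a < Real.exp b := Real.exp_lt_exp.mpr hab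
  have he2 : Real.exp (-b) < Real.exp (-a) := Real.exp_lt_exp.mpr (by linarith)
  have h3 : β2 * δ * (1 - 2 * logitρ (psiU κ δ β2 b)) <
      β2 * δ * (1 - 2 * logitρ (psiU κ δ β2 a)) :=
    mul_lt_mul_of_pos_left (by linarith) (mul_pos hβ2 hδ)
  unfold psiF
  linarith

lemma continuous_psiF (κ δ β2 : ℝ) : Continuous (psiF κ δ β2) := by
  have hU : Continuous (psiU κ δ β2) :=
    continuous_const.mul (continuous_const.add (continuous_const.mul continuous_logitρ))
  exact (continuous_const.mul
      (continuous_const.sub (continuous_const.mul (continuous_logitρ.comp hU)))).sub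
    (Real.continuous_exp.sub (Real.continuous_exp.comp continuous_neg))

/-- For `δ > 0`, `ψ` is twice differentiable, `ψ''` has a unique zero `w₀`, with
`ψ'' > 0` before `w₀` and `ψ'' < 0` after; hence `ψ` is strictly convex on
`(-∞, w₀]` and strictly concave on `[w₀, ∞)`. -/
theorem psi_inflection (κ δ β1 β2 : ℝ) (hδ : 0 < δ) (hβ1 : 0 < β1) (hβ2 : 0 < β2) :
    Differentiable ℝ (mapψ κ δ β1 β2) ∧
    Differentiable ℝ (deriv (mapψ κ δ β1 β2)) ∧
    ∃ w₀ : ℝ,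
      deriv (deriv (mapψ κ δ β1 β2)) w₀ = 0 ∧
      (∀ w : ℝ, deriv (deriv (mapψ κ δ β1 β2)) w = 0 → w = w₀) ∧
      (∀ w : ℝ, w < w₀ → 0 < deriv (deriv (mapψ κ δ β1 β2)) w) ∧
      (∀ w : ℝ, w₀ < w → deriv (deriv (mapψ κ δ β1 β2)) w < 0) ∧
      StrictConvexOn ℝ (Set.Iic w₀) (mapψ κ δ β1 β2) ∧
      StrictConcaveOn ℝ (Set.Ici w₀) (mapψ κ δ β1 β2) := by
  have hdiff : Differentiable ℝ (mapψ κ δ β1 β2) :=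
    fun w => (hasDerivAt_mapψ κ δ β1 β2 w).differentiableAt
  have hderiv1 : deriv (mapψ κ δ β1 β2) = psi1 κ δ β1 β2 :=
    funext fun w => (hasDerivAt_mapψ κ δ β1 β2 w).deriv
  have hdiff2 : Differentiable ℝ (deriv (mapψ κ δ β1 β2)) := by
    rw [hderiv1]; exact fun w => (hasDerivAt_psi1 κ δ β1 β2 w).differentiableAt
  have hderiv2 : ∀ w, deriv (deriv (mapψ κ δ β1 β2)) w = psi2 κ δ β1 β2 w := by
    intro w; rw [hderiv1]; exact (hasDerivAt_psi1 κ δ β1 β2 w).deriv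
  have hP := psiP_pos κ δ β1 β2 hδ hβ1 hβ2
  have hAnti := psiF_strictAnti κ δ β2 hδ hβ2
  -- existence of the zero of psiF
  set b := Real.log (β2 * δ + 2) with hbdef
  have hcpos : 0 < β2 * δ := mul_pos hβ2 hδ
  have hexpb : Real.exp b = β2 * δ + 2 := Real.exp_log (by linarith)
  have hbpos : 0 < b := Real.log_pos (by linarith)
  have hexpnb : Real.exp (-b) < 1 := Real.exp_lt_one_iff.mpr (by linarith)
  have hexpnb0 : 0 < Real.exp (-b) := Real.exp_pos _
  have hFb : psiF κ δ β2 b < 0 := by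
    have h1 := logitρ_pos (psiU κ δ β2 b)
    unfold psiF
    nlinarith
  have hFnb : 0 < psiF κ δ β2 (-b) := by
    have h1 := logitρ_lt_one (psiU κ δ β2 (-b))
    have hexb : Real.exp (- -b) = β2 * δ + 2 := by rw [neg_neg, hexpb]
    unfold psiF
    rw [hexb]
    nlinarith
  have hab : -b ≤ b := by linarith
  have := intermediate_value_Icc' hab (continuous_psiF κ δ β2).continuousOn
  obtain ⟨w₀, -, hw₀⟩ := this ⟨hFb.le, hFnb.le⟩
  -- sign facts
  have hpos : ∀ w, w < w₀ → 0 < deriv (deriv (mapψ κ δ β1 β2)) w := by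
    intro w hw
    rw [hderiv2, psi2_eq]
    have : (0 : ℝ) < psiF κ δ β2 w := by
      have := hAnti hw
      rw [hw₀] at this
      linarith
    exact mul_pos (hP w) this
  have hneg : ∀ w, w₀ < w → deriv (deriv (mapψ κ δ β1 β2)) w < 0 := by
    intro w hw
    rw [hderiv2, psi2_eq]
    have : psiF κ δ β2 w < 0 := by
      have := hAnti hw
      rw [hw₀] at this
      linarith
    exact mul_neg_of_pos_of_neg (hP w) this
  refine ⟨hdiff, hdiff2, w₀, ?_, ?_, hpos, hneg, ?_, ?_⟩
  · rw [hderiv2, psi2_eq, hw₀, mul_zero]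
  · intro w hw
    rw [hderiv2, psi2_eq] at hw
    have hF : psiF κ δ β2 w = 0 := by
      rcases mul_eq_zero.mp hw with h | h
      · exact absurd h (hP w).ne'
      · exact h
    exact hAnti.injective (hF.trans hw₀.symm)
  · refine strictConvexOn_of_deriv2_pos (convex_Iic w₀)
      (hdiff.continuous.continuousOn) ?_
    intro x hx
    rw [interior_Iic] at hx
    exact hpos x hx
  · refine strictConcaveOn_of_deriv2_neg (convex_Ici w₀)
      (hdiff.continuous.continuousOn) ?_
    intro x hx
    rw [interior_Ici] at hx
    exact hneg x hx
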